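/- arXiv:1608.02779 — 3 statements merged into one kernel-verified Lean document; each statement's English description precedes it below -/
import Mathlib

section
/- The stochastic R matrix elements satisfy S(λ,μ)^{γ,δ}_{α,β} = S(λ,μ)^{α',β'}_{γ',δ'} · (g̃_γ(λ) g̃_δ(μ))/(g̃_α(λ) g̃_β(μ)) · q^{φ(β,α)-φ(γ,δ)}, where α' denotes the reverse of the array α. -/
open scoped BigOperators

noncomputable section

/-- The q-Pochhammer symbol `(z;q)_m = ∏_{j=0}^{m-1} (1 - z q^j)`. -/
def qP (q z : ℝ) (m : ℕ) : ℝ := ∏ j ∈ Finset.range m, (1 - z * q ^ j)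

/-- The q-binomial coefficient, zero outside `0 ≤ k ≤ m`. -/
def qBinom (q : ℝ) (m k : ℕ) : ℝ :=
  if k ≤ m then qP q q m / (qP q q k * qP q q (m - k)) else 0

/-- `|α| = α_1 + ⋯ + α_n`. -/
def wt {n : ℕ} (α : Fin n → ℕ) : ℕ := ∑ i, α i

/-- `φ(α,β) = ∑_{i<j} α_i β_j` for integer arrays. -/
def phiZ {n : ℕ} (α β : Fin n → ℤ) : ℤ :=
  ∑ i, ∑ j, if i < j then α i * β j else 0

/-- coercion of a nonnegative-integer array to an integer array -/
def zc {n : ℕ} (α : Fin n → ℕ) : Fin n → ℤ := fun i => (α i : ℤ)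

/-- The weight function `Φ_q(γ|β; λ,μ)`. -/
def Phi {n : ℕ} (q lam mu : ℝ) (γ β : Fin n → ℕ) : ℝ :=
  q ^ (phiZ (zc β - zc γ) (zc γ)) * (mu / lam) ^ wt γ *
    (qP q lam (wt γ) * qP q (mu / lam) (wt β - wt γ) / qP q mu (wt β)) *
    ∏ i, qBinom q (β i) (γ i)

/-- `g_α(μ) = μ^{-|α|} (μ;q)_{|α|} / ∏_i (q;q)_{α_i}`. -/
def gfun {n : ℕ} (q mu : ℝ) (α : Fin n → ℕ) : ℝ :=
  mu ^ (-(wt α : ℤ)) * qP q mu (wt α) / ∏ i, qP q q (α i)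

/-- `g̃_α(μ) = g_α(μ) q^{-φ(α,α)}`. -/
def gtilde {n : ℕ} (q mu : ℝ) (α : Fin n → ℕ) : ℝ :=
  gfun q mu α * q ^ (-(phiZ (zc α) (zc α)))

/-- The stochastic R matrix element `S(λ,μ)^{γ,δ}_{α,β}`. -/
def Smat {n : ℕ} (q lam mu : ℝ) (γ δ α β : Fin n → ℕ) : ℝ :=
  if γ + δ = α + β then Phi q lam mu γ β else 0

/-- `α' = (α_n,…,α_1)`, the reverse-ordered array. -/
def rev {n : ℕ} (α : Fin n → ℕ) : Fin n → ℕ := fun i => α i.rev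

/-!
Where `γ ≤ β` fails, both sides vanish through a q-binomial factor. Otherwise write `β = γ + ε`,
`δ = α + ε`. Multiplying `Φ_q(γ|β; λ,μ)` by `g̃_α(λ) g̃_β(μ) q^{-φ(β,α)}` cancels `(μ;q)_{|β|}` and
every `(q;q)_{β_i}`, leaving `reversalWeight γ ε α`. Apart from its power of `q` this weight is
symmetric in `γ ↔ α` and invariant under reversal of the arrays; its `q`-exponent is `-∑ φ(x, y)`
over the pairs `x`, `y` with `x` not after `y` in the sequence `(γ, ε, α)`, so `φ(x', y') = φ(y, x)`
makes it invariant under `(γ, ε, α) ↦ (α', ε', γ')`. The same computation for the reversed data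
gives `Φ_q(α'|δ'; λ,μ) g̃_γ(λ) g̃_δ(μ) q^{-φ(γ,δ)} = reversalWeight α' ε' γ'`, and the weights agree.
-/

lemma qP_self_ne_zero {q : ℝ} (hq0 : 0 < q) (hq1 : q < 1) (m : ℕ) : qP q q m ≠ 0 :=
  Finset.prod_ne_zero_iff.mpr fun j _ => by
    have : q ^ j ≤ 1 := pow_le_one₀ hq0.le hq1.le
    nlinarith

lemma qBinom_add (q : ℝ) (a b : ℕ) :
    qBinom q (a + b) a = qP q q (a + b) / (qP q q a * qP q q b) := by
  simp [qBinom]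

lemma qBinom_eq_zero_of_lt (q : ℝ) {m k : ℕ} (h : m < k) : qBinom q m k = 0 :=
  if_neg h.not_ge

lemma le_iff_le_of_add_eq {M : Type*} [AddCommMonoid M] [PartialOrder M]
    [IsOrderedCancelAddMonoid M] {a b c d : M} (h : a + b = c + d) : c ≤ b ↔ a ≤ d := by
  constructor
  · intro hcb
    refine le_of_add_le_add_right (a := c) ?_
    calc a + c ≤ a + b := by gcongr
      _ = d + c := by rw [h, add_comm]
  · intro had
    refine le_of_add_le_add_left (a := d) ?_
    calc d + c = a + b := by rw [h, add_comm]
      _ ≤ d + b := by gcongr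

section Arrays

variable {n : ℕ}

lemma wt_add (a b : Fin n → ℕ) : wt (a + b) = wt a + wt b :=
  Finset.sum_add_distrib

lemma zc_add (a b : Fin n → ℕ) : zc (a + b) = zc a + zc b := by
  ext i
  simp [zc]

lemma phiZ_add_left (a b c : Fin n → ℤ) : phiZ (a + b) c = phiZ a c + phiZ b c := by
  simp only [phiZ, Pi.add_apply, add_mul, ite_add_zero, Finset.sum_add_distrib]

lemma phiZ_add_right (a b c : Fin n → ℤ) : phiZ a (b + c) = phiZ a b + phiZ a c := by
  simp only [phiZ, Pi.add_apply, mul_add, ite_add_zero, Finset.sum_add_distrib]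

lemma phiZ_comp_rev (a b : Fin n → ℤ) : phiZ (a ∘ Fin.rev) (b ∘ Fin.rev) = phiZ b a := by
  calc phiZ (a ∘ Fin.rev) (b ∘ Fin.rev)
      = ∑ i : Fin n, ∑ j : Fin n, if j.rev < i.rev then a i.rev * b j.rev else 0 := by
        simp [phiZ, Fin.rev_lt_rev]
    _ = ∑ i : Fin n, ∑ j : Fin n, if j < i then a i * b j else 0 := by
        rw [← Equiv.sum_comp Fin.revPerm]
        refine Finset.sum_congr rfl fun i _ => ?_
        rw [← Equiv.sum_comp Fin.revPerm]
        simp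
    _ = phiZ b a := by
        rw [Finset.sum_comm]
        refine Finset.sum_congr rfl fun i _ => Finset.sum_congr rfl fun j _ => ?_
        split_ifs <;> ring

lemma rev_add (a b : Fin n → ℕ) : rev (a + b) = rev a + rev b := rfl

lemma rev_rev (a : Fin n → ℕ) : rev (rev a) = a := by
  ext i
  simp [rev]

lemma rev_injective : Function.Injective (rev : (Fin n → ℕ) → Fin n → ℕ) :=
  Function.LeftInverse.injective rev_rev

lemma rev_add_eq_rev_add_iff {a b c d : Fin n → ℕ} :
    rev a + rev b = rev c + rev d ↔ a + b = c + d := by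
  rw [← rev_add, ← rev_add, rev_injective.eq_iff]

lemma rev_le_rev_iff {a b : Fin n → ℕ} : rev a ≤ rev b ↔ a ≤ b :=
  ⟨fun h i => by simpa [rev] using h i.rev, fun h i => h i.rev⟩

lemma wt_rev (a : Fin n → ℕ) : wt (rev a) = wt a :=
  Equiv.sum_comp Fin.revPerm a

lemma prod_rev (f : ℕ → ℝ) (a : Fin n → ℕ) : ∏ i, f (rev a i) = ∏ i, f (a i) :=
  Equiv.prod_comp Fin.revPerm fun i => f (a i)

lemma phiZ_zc_rev (a b : Fin n → ℕ) : phiZ (zc (rev a)) (zc (rev b)) = phiZ (zc b) (zc a) :=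
  phiZ_comp_rev (zc a) (zc b)

end Arrays

section Weights

variable {n : ℕ} (q lam mu : ℝ)

lemma Phi_eq_zero_of_not_le {γ β : Fin n → ℕ} (h : ¬ γ ≤ β) : Phi q lam mu γ β = 0 := by
  obtain ⟨i, hi⟩ := not_forall.mp h
  have : ∏ i, qBinom q (β i) (γ i) = 0 :=
    Finset.prod_eq_zero (Finset.mem_univ i) (qBinom_eq_zero_of_lt q (not_le.mp hi))
  rw [Phi, this, mul_zero]

lemma gtilde_rev (α : Fin n → ℕ) : gtilde q mu (rev α) = gtilde q mu α := by
  simp only [gtilde, gfun, wt_rev, prod_rev, phiZ_zc_rev]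

lemma gtilde_ne_zero {q mu : ℝ} (hq : q ≠ 0) (hqP : ∀ m, qP q q m ≠ 0) (hmu : mu ≠ 0)
    {α : Fin n → ℕ} (hα : qP q mu (wt α) ≠ 0) : gtilde q mu α ≠ 0 := by
  have : ∏ i, qP q q (α i) ≠ 0 := Finset.prod_ne_zero_iff.mpr fun i _ => hqP _
  unfold gtilde gfun
  positivity

def reversalWeight (γ ε α : Fin n → ℕ) : ℝ :=
  (lam ^ (wt γ + wt α) * mu ^ wt ε)⁻¹ *
    (qP q lam (wt γ) * qP q lam (wt α) * qP q (mu / lam) (wt ε)) /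
    ((∏ i, qP q q (γ i)) * (∏ i, qP q q (ε i)) * ∏ i, qP q q (α i)) *
    q ^ (-(phiZ (zc γ) (zc γ) + phiZ (zc ε) (zc ε) + phiZ (zc α) (zc α) +
      phiZ (zc γ) (zc ε) + phiZ (zc γ) (zc α) + phiZ (zc ε) (zc α)))

lemma reversalWeight_rev (γ ε α : Fin n → ℕ) :
    reversalWeight q lam mu (rev α) (rev ε) (rev γ) = reversalWeight q lam mu γ ε α := by
  simp only [reversalWeight, wt_rev, prod_rev, phiZ_zc_rev]
  ring_nf

lemma Phi_mul_gtilde_mul_gtilde {q lam mu : ℝ} (hq : q ≠ 0) (hqP : ∀ m, qP q q m ≠ 0)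
    (hmu : mu ≠ 0) (γ ε α : Fin n → ℕ) (hγε : qP q mu (wt (γ + ε)) ≠ 0) :
    Phi q lam mu γ (γ + ε) * gtilde q lam α * gtilde q mu (γ + ε) *
        q ^ (-phiZ (zc (γ + ε)) (zc α)) = reversalWeight q lam mu γ ε α := by
  rw [wt_add] at hγε
  have : ∏ i, qP q q (γ i + ε i) ≠ 0 := Finset.prod_ne_zero_iff.mpr fun i _ => hqP _
  simp only [Phi, gtilde, gfun, reversalWeight, wt_add, zc_add, Nat.add_sub_cancel_left,
    add_sub_cancel_left, phiZ_add_left, phiZ_add_right, Pi.add_apply, qBinom_add,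
    Finset.prod_div_distrib, Finset.prod_mul_distrib, zpow_neg, zpow_add₀ hq, zpow_natCast]
  field_simp
  ring

lemma Phi_reversal {q lam mu : ℝ} (hq0 : 0 < q) (hq1 : q < 1) (hlam : lam ≠ 0) (hmu : mu ≠ 0)
    (γ ε α : Fin n → ℕ) (hα : qP q lam (wt α) ≠ 0) (hγε : qP q mu (wt (γ + ε)) ≠ 0)
    (hαε : qP q mu (wt (α + ε)) ≠ 0) :
    Phi q lam mu γ (γ + ε)
      = Phi q lam mu (rev α) (rev (α + ε)) *
        (gtilde q lam γ * gtilde q mu (α + ε) / (gtilde q lam α * gtilde q mu (γ + ε))) *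
        q ^ (phiZ (zc (γ + ε)) (zc α) - phiZ (zc γ) (zc (α + ε))) := by
  have hq : q ≠ 0 := hq0.ne'
  have hqP := qP_self_ne_zero hq0 hq1
  have hL := Phi_mul_gtilde_mul_gtilde (lam := lam) hq hqP hmu γ ε α hγε
  have hR := Phi_mul_gtilde_mul_gtilde (lam := lam) hq hqP hmu (rev α) (rev ε) (rev γ)
    (by rwa [← rev_add, wt_rev])
  rw [reversalWeight_rev, ← rev_add, gtilde_rev, gtilde_rev, phiZ_zc_rev, ← hL] at hR
  have := gtilde_ne_zero hq hqP hlam hα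
  have := gtilde_ne_zero hq hqP hmu hγε
  rw [zpow_sub₀ hq]
  rw [zpow_neg, zpow_neg] at hR
  field_simp at hR ⊢
  exact hR.symm

end Weights

/-- The symmetry (osr) of the stochastic R matrix:
`S(λ,μ)^{γ,δ}_{α,β} = S(λ,μ)^{α',β'}_{γ',δ'}
  · (g̃_γ(λ) g̃_δ(μ))/(g̃_α(λ) g̃_β(μ)) · q^{φ(β,α)-φ(γ,δ)}`. -/
theorem Smat_reversal {n : ℕ} (q lam mu : ℝ) (hq0 : 0 < q) (hq1 : q < 1)
    (hlam : lam ≠ 0) (hmu : mu ≠ 0) (α β γ δ : Fin n → ℕ)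
    (h1 : qP q lam (wt α) ≠ 0) (h2 : qP q mu (wt β) ≠ 0)
    (h3 : qP q mu (wt δ) ≠ 0) :
    Smat q lam mu γ δ α β
      = Smat q lam mu (rev α) (rev β) (rev γ) (rev δ) *
        (gtilde q lam γ * gtilde q mu δ / (gtilde q lam α * gtilde q mu β)) *
        q ^ (phiZ (zc β) (zc α) - phiZ (zc γ) (zc δ)) := by
  simp only [Smat, rev_add_eq_rev_add_iff, eq_comm (a := α + β)]
  split_ifs with hsum
  · by_cases hγβ : γ ≤ β
    · obtain ⟨ε, rfl⟩ := exists_add_of_le hγβ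
      obtain rfl : δ = α + ε := add_left_cancel (hsum.trans (add_left_comm _ _ _))
      exact Phi_reversal hq0 hq1 hlam hmu γ ε α h1 h2 h3
    · have hαδ : ¬ rev α ≤ rev δ := by rwa [rev_le_rev_iff, le_iff_le_of_add_eq hsum]
      rw [Phi_eq_zero_of_not_le _ _ _ hγβ, Phi_eq_zero_of_not_le _ _ _ hαδ, zero_mul, zero_mul]
  · rw [zero_mul, zero_mul]
end
end

section
/- For all α,β ∈ Z_{≥0}^n: Σ_{γ ≤ α} q^{φ(α-γ,β-γ) - φ(α,β) + φ(γ, α+β-γ)} Φ_q(γ|α; λ,μ) = 1. -/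
open scoped BigOperators

noncomputable section

/-!
By bilinearity of `φ`, `φ(α-γ,β-γ) - φ(α,β) + φ(γ,α+β-γ) + φ(α-γ,γ) = φ(γ,α-γ)`, so `β` drops
out and the summand becomes `q^{φ(γ,α-γ)} ∏ᵢ [αᵢ, γᵢ]_q` times a function of `|γ|` alone. The
multivariate q-Vandermonde identity `∑_{|γ| = k} q^{φ(γ,α-γ)} ∏ᵢ [αᵢ, γᵢ]_q = [|α|, k]_q`
collapses the sum to `∑ₖ [N, k]_q (μ/λ)^k (λ;q)ₖ (μ/λ;q)_{N-k} / (μ;q)_N` with `N = |α|`, and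
the q-Chu–Vandermonde identity evaluates the numerator to `(μ;q)_N`.
-/

variable {q : ℝ}

@[simp] lemma qP_zero (z : ℝ) : qP q z 0 = 1 := Finset.prod_range_zero _

lemma qP_succ (z : ℝ) (m : ℕ) : qP q z (m + 1) = qP q z m * (1 - z * q ^ m) :=
  Finset.prod_range_succ _ _

lemma qP_self_pos (hq0 : 0 < q) (hq1 : q < 1) (m : ℕ) : 0 < qP q q m :=
  Finset.prod_pos fun j _ => by
    have : q ^ (j + 1) < 1 := pow_lt_one₀ hq0.le hq1 j.succ_ne_zero
    rw [pow_succ'] at this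
    linarith

lemma qBinom_zero_right (hq : ∀ m, qP q q m ≠ 0) (m : ℕ) : qBinom q m 0 = 1 := by
  simp [qBinom, div_self (hq m)]

lemma qBinom_self (hq : ∀ m, qP q q m ≠ 0) (m : ℕ) : qBinom q m m = 1 := by
  simp [qBinom, div_self (hq m)]

lemma qBinom_of_lt {m k : ℕ} (h : m < k) : qBinom q m k = 0 := if_neg (by omega)

lemma qBinom_succ_succ (hq : ∀ m, qP q q m ≠ 0) (m k : ℕ) :
    qBinom q (m + 1) (k + 1) = qBinom q m (k + 1) + q ^ (m - k) * qBinom q m k := by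
  rcases lt_trichotomy m k with h | rfl | h
  · simp [qBinom_of_lt h, qBinom_of_lt (Nat.succ_lt_succ h), qBinom_of_lt (Nat.lt_succ_of_lt h)]
  · simp [qBinom_self hq, qBinom_of_lt (Nat.lt_succ_self m)]
  obtain ⟨d, rfl⟩ : ∃ d, m = k + d + 1 := ⟨m - k - 1, by omega⟩
  have hk : 1 - q * q ^ k ≠ 0 := right_ne_zero_of_mul (qP_succ (q := q) q k ▸ hq (k + 1))
  have hd : 1 - q * q ^ d ≠ 0 := right_ne_zero_of_mul (qP_succ (q := q) q d ▸ hq (d + 1))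
  simp only [qBinom, if_pos (by omega : k + 1 ≤ k + d + 1 + 1),
    if_pos (by omega : k + 1 ≤ k + d + 1), if_pos (by omega : k ≤ k + d + 1),
    show k + d + 1 + 1 - (k + 1) = d + 1 by omega,
    show k + d + 1 - (k + 1) = d by omega, show k + d + 1 - k = d + 1 by omega, qP_succ q]
  field_simp [hq k, hq d]
  ring

lemma sum_range_qBinom_succ (hq : ∀ m, qP q q m ≠ 0) (M : ℕ) (D : ℕ → ℝ) :
    ∑ k ∈ Finset.range (M + 2), qBinom q (M + 1) k * D k
      = ∑ k ∈ Finset.range (M + 1), qBinom q M k * (D k + q ^ (M - k) * D (k + 1)) := by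
  have hshift : ∑ k ∈ Finset.range (M + 1), qBinom q M (k + 1) * D (k + 1) + qBinom q M 0 * D 0
      = ∑ k ∈ Finset.range (M + 1), qBinom q M k * D k := by
    rw [← Finset.sum_range_succ' (fun k => qBinom q M k * D k), Finset.sum_range_succ,
      qBinom_of_lt (Nat.lt_succ_self M), zero_mul, add_zero]
  rw [Finset.sum_range_succ', qBinom_zero_right hq, ← qBinom_zero_right hq M]
  simp only [qBinom_succ_succ hq, mul_add, add_mul, Finset.sum_add_distrib]
  rw [add_right_comm, hshift]
  congr 1
  exact Finset.sum_congr rfl fun k _ => by ring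

theorem qChuVandermonde (hq : ∀ m, qP q q m ≠ 0) (a x : ℝ) (N : ℕ) :
    ∑ k ∈ Finset.range (N + 1), qBinom q N k * (x ^ k * qP q a k * qP q x (N - k))
      = qP q (a * x) N := by
  induction N with
  | zero => simp [qBinom_zero_right hq]
  | succ N ih =>
    rw [sum_range_qBinom_succ hq, qP_succ, ← ih, Finset.sum_mul]
    refine Finset.sum_congr rfl fun k hk => ?_
    have hk : k ≤ N := Nat.lt_succ_iff.mp (Finset.mem_range.mp hk)
    have hpow : q ^ k * q ^ (N - k) = q ^ N := by rw [← pow_add, Nat.add_sub_cancel' hk]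
    rw [show N + 1 - k = N - k + 1 by omega, show N + 1 - (k + 1) = N - k by omega,
      qP_succ x, qP_succ a, ← hpow]
    ring

theorem qVandermonde (hq : ∀ m, qP q q m ≠ 0) (a b : ℕ) (C : ℕ → ℝ) :
    ∑ c ∈ Finset.range (a + 1), qBinom q a c *
        ∑ k ∈ Finset.range (b + 1), qBinom q b k * (q ^ (c * (b - k)) * C (c + k))
      = ∑ m ∈ Finset.range (a + b + 1), qBinom q (a + b) m * C m := by
  induction a generalizing C with
  | zero => simp [qBinom_zero_right hq]
  | succ a ih =>
    rw [show a + 1 + b + 1 = a + b + 2 by omega, show a + 1 + b = a + b + 1 by omega,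
      sum_range_qBinom_succ hq, sum_range_qBinom_succ hq]
    simp only [mul_add, Finset.sum_add_distrib, ih]
    rw [← ih fun m => q ^ (a + b - m) * C (m + 1)]
    congr 1
    refine Finset.sum_congr rfl fun c hc => ?_
    have hc : c ≤ a := Nat.lt_succ_iff.mp (Finset.mem_range.mp hc)
    rw [Finset.mul_sum, Finset.mul_sum, Finset.mul_sum]
    refine Finset.sum_congr rfl fun k hk => ?_
    have hk : k ≤ b := Nat.lt_succ_iff.mp (Finset.mem_range.mp hk)
    have hpow :
        q ^ (a - c) * q ^ ((c + 1) * (b - k)) = q ^ (c * (b - k)) * q ^ (a + b - (c + k)) := by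
      rw [← pow_add, ← pow_add, add_mul, one_mul]
      congr 1
      omega
    rw [show c + 1 + k = c + k + 1 by omega]
    linear_combination (qBinom q a c * qBinom q b k * C (c + k + 1)) * hpow

/-- The `ℕ`-valued form of `phiZ`, so that `q ^ phiN a b` needs no `q ≠ 0`. -/
def phiN {n : ℕ} (a b : Fin n → ℕ) : ℕ := ∑ i, ∑ j, if i < j then a i * b j else 0

lemma phiN_cons {n : ℕ} (c : ℕ) (a : Fin n → ℕ) (b : Fin (n + 1) → ℕ) :
    phiN (Fin.cons c a) b = c * ∑ j, Fin.tail b j + phiN a (Fin.tail b) := by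
  simp [phiN, Fin.sum_univ_succ, Fin.succ_pos, Finset.mul_sum, Fin.tail]

lemma wt_cons {n : ℕ} (c : ℕ) (a : Fin n → ℕ) : wt (Fin.cons c a : Fin (n + 1) → ℕ) = c + wt a :=
  Fin.sum_cons c a

lemma sum_Iic_fin_succ {n : ℕ} {M : Type*} [AddCommMonoid M] (α : Fin (n + 1) → ℕ)
    (f : (Fin (n + 1) → ℕ) → M) :
    ∑ γ ∈ Finset.Iic α, f γ
      = ∑ c ∈ Finset.Iic (α 0), ∑ y ∈ Finset.Iic (Fin.tail α), f (Fin.cons c y) := by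
  rw [← Finset.sum_product']
  refine Finset.sum_nbij' (fun γ => (γ 0, Fin.tail γ)) (fun p => Fin.cons p.1 p.2) ?_ ?_ ?_ ?_ ?_
  · simp +contextual [Pi.le_def, Fin.forall_fin_succ, Fin.tail]
  · simp +contextual [Pi.le_def, Fin.forall_fin_succ, Fin.tail]
  · simp
  · simp
  · simp

theorem qVandermonde_pi (hq : ∀ m, qP q q m ≠ 0) {n : ℕ} (α : Fin n → ℕ) (C : ℕ → ℝ) :
    ∑ γ ∈ Finset.Iic α, q ^ phiN γ (α - γ) * (∏ i, qBinom q (α i) (γ i)) * C (wt γ)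
      = ∑ k ∈ Finset.range (wt α + 1), qBinom q (wt α) k * C k := by
  induction n generalizing C with
  | zero =>
    have : Finset.Iic α = {α} := by
      ext γ; simp [Subsingleton.elim γ α]
    simp [this, wt, phiN, qBinom_zero_right hq]
  | succ n ih =>
    have hcons : ∀ c, ∀ y ≤ Fin.tail α,
        q ^ phiN (Fin.cons c y : Fin (n + 1) → ℕ) (α - Fin.cons c y)
            * (∏ i, qBinom q (α i) ((Fin.cons c y : Fin (n + 1) → ℕ) i))
            * C (wt (Fin.cons c y : Fin (n + 1) → ℕ))
          = qBinom q (α 0) c * (q ^ phiN y (Fin.tail α - y) * (∏ i, qBinom q (Fin.tail α i) (y i))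
              * (q ^ (c * (wt (Fin.tail α) - wt y)) * C (c + wt y))) := by
      intro c y hy
      have htail : Fin.tail (α - Fin.cons c y) = Fin.tail α - y := rfl
      have hwt : ∑ j, (Fin.tail α - y) j = wt (Fin.tail α) - wt y :=
        Finset.sum_tsub_distrib _ fun j _ => hy j
      rw [phiN_cons, htail, hwt, wt_cons, Fin.prod_univ_succ, pow_add]
      simp only [Fin.cons_zero, Fin.cons_succ, Fin.tail]
      ring
    have hwt : wt α = α 0 + wt (Fin.tail α) := by rw [← wt_cons, Fin.cons_self_tail]
    rw [sum_Iic_fin_succ, ← Nat.range_succ_eq_Iic, hwt, ← qVandermonde hq]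
    refine Finset.sum_congr rfl fun c _ => ?_
    rw [Finset.sum_congr rfl fun y hy => hcons c y (Finset.mem_Iic.mp hy), ← Finset.mul_sum]
    exact congrArg _ (ih _ fun k => q ^ (c * (wt (Fin.tail α) - k)) * C (c + k))

lemma phiZ_exponent_identity {n : ℕ} (A B G : Fin n → ℤ) :
    phiZ (A - G) (B - G) - phiZ A B + phiZ G (A + B - G) + phiZ (A - G) G = phiZ G (A - G) := by
  simp only [phiZ, Pi.sub_apply, Pi.add_apply, ← Finset.sum_sub_distrib, ← Finset.sum_add_distrib]
  refine Finset.sum_congr rfl fun i _ => Finset.sum_congr rfl fun j _ => ?_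
  split_ifs <;> ring

lemma phiZ_zc_sub {n : ℕ} {γ α : Fin n → ℕ} (h : γ ≤ α) :
    phiZ (zc γ) (zc α - zc γ) = phiN γ (α - γ) := by
  simp only [phiZ, phiN, zc, Pi.sub_apply, Nat.cast_sum, Nat.cast_ite, Nat.cast_mul,
    Nat.cast_sub (h _), Nat.cast_zero]

/-- Consistency condition for the trivial representation of the ZF algebra:
`∑_{γ ≤ α} q^{φ(α-γ,β-γ) - φ(α,β) + φ(γ,α+β-γ)} Φ_q(γ|α;λ,μ) = 1`. -/
theorem trivial_rep_consistency {n : ℕ} (q lam mu : ℝ) (hq0 : 0 < q)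
    (hq1 : q < 1) (hlam : lam ≠ 0) (α β : Fin n → ℕ)
    (hmu : qP q mu (wt α) ≠ 0) :
    ∑ γ ∈ Finset.Iic α,
      q ^ (phiZ (zc α - zc γ) (zc β - zc γ) - phiZ (zc α) (zc β)
            + phiZ (zc γ) (zc α + zc β - zc γ)) * Phi q lam mu γ α = 1 := by
  have hq : ∀ m, qP q q m ≠ 0 := fun m => (qP_self_pos hq0 hq1 m).ne'
  set C : ℕ → ℝ := fun k =>
    (mu / lam) ^ k * qP q lam k * qP q (mu / lam) (wt α - k) / qP q mu (wt α) with hC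
  have hsummand : ∀ γ ∈ Finset.Iic α,
      q ^ (phiZ (zc α - zc γ) (zc β - zc γ) - phiZ (zc α) (zc β)
            + phiZ (zc γ) (zc α + zc β - zc γ)) * Phi q lam mu γ α
        = q ^ phiN γ (α - γ) * (∏ i, qBinom q (α i) (γ i)) * C (wt γ) := by
    intro γ hγ
    rw [← zpow_natCast, ← phiZ_zc_sub (Finset.mem_Iic.mp hγ),
      ← phiZ_exponent_identity (zc α) (zc β) (zc γ),
      zpow_add₀ hq0.ne' _ (phiZ (zc α - zc γ) (zc γ)), Phi, hC]
    ring
  rw [Finset.sum_congr rfl hsummand, qVandermonde_pi hq, hC]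
  simp only [← mul_div_assoc, ← Finset.sum_div]
  rw [qChuVandermonde hq, mul_div_cancel₀ mu hlam, div_self hmu]
end
end

section
/- In the q-boson algebra, let Z_α(μ) = ((b_+;q)_∞/(μ^{-1}b_+;q)_∞) k^{α_2} b_-^{α_1} for α=(α_1,α_2)∈Z_{≥0}^2 (infinite product ratio defined by its series expansion). Then the auxiliary condition Z_β(μ) Z_0(λ)^{-1} Z_γ(λ) = q^{φ(β,γ)} Z_{β+γ}(μ) holds for all β,γ ∈ Z_{≥0}^2, where φ(β,γ) = β_1 γ_2. -/
open scoped BigOperators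

noncomputable section

/-- The Fock space `F = ⊕_{m≥0} ℂ|m⟩`, realized as coefficient sequences:
`v : ℕ → ℝ` stands for the vector `∑_m v m · |m⟩`. -/
abbrev Fock : Type := ℕ → ℝ

/-- The creation operator `b₊`, with `b₊|m⟩ = |m+1⟩`. -/
def Bp : Module.End ℝ Fock where
  toFun v := fun i => if i = 0 then 0 else v (i - 1)
  map_add' x y := by funext i; by_cases h : i = 0 <;> simp [h]
  map_smul' c x := by funext i; by_cases h : i = 0 <;> simp [h]

/-- The annihilation operator `b₋`, with `b₋|m⟩ = (1-q^m)|m-1⟩`. -/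
def Bm (q : ℝ) : Module.End ℝ Fock where
  toFun v := fun i => (1 - q ^ (i + 1)) * v (i + 1)
  map_add' x y := by funext i; simp [mul_add]
  map_smul' c x := by funext i; simp; ring

/-- The operator `k`, with `k|m⟩ = q^m|m⟩`. -/
def Kop (q : ℝ) : Module.End ℝ Fock where
  toFun v := fun i => q ^ i * v i
  map_add' x y := by funext i; simp [mul_add]
  map_smul' c x := by funext i; simp; ring

/-- The basis vector `|m⟩`. -/
def fock (m : ℕ) : Fock := fun i => if i = m then 1 else 0

/-- The trace `Tr(X) = ∑_{m≥0} ⟨m|X|m⟩/(q;q)_m`, with pairing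
`⟨m|m'⟩ = δ_{m,m'}(q;q)_m`; equivalently the sum of diagonal coefficients. -/
def Tr (X : Module.End ℝ Fock) : ℝ := ∑' m : ℕ, X (fock m) m

/-- Series coefficient of the ratio of infinite products
`(η b₊;q)_∞/(ζ b₊;q)_∞ = ∑_j ((η/ζ;q)_j/(q;q)_j)(ζ b₊)^j`:
the coefficient of `b₊^j` is `(∏_{t<j}(ζ - η q^t))/(q;q)_j`. -/
def ratioCoeff (q η ζ : ℝ) (j : ℕ) : ℝ :=
  (∏ t ∈ Finset.range j, (ζ - η * q ^ t)) / qP q q j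

/-- The operator `(η b₊;q)_∞/(ζ b₊;q)_∞ = ∑_j ratioCoeff j · b₊^j`,
a well-defined linear operator on the Fock space since `b₊` raises degree. -/
def Ratio (q η ζ : ℝ) : Module.End ℝ Fock where
  toFun v := fun i => ∑ j ∈ Finset.range (i + 1), ratioCoeff q η ζ j * v (i - j)
  map_add' x y := by
    funext i
    simp only [Pi.add_apply, mul_add, Finset.sum_add_distrib]
  map_smul' c x := by
    funext i
    simp only [Pi.smul_apply, smul_eq_mul, RingHom.id_apply, Finset.mul_sum]
    exact Finset.sum_congr rfl fun j _ => by ring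

/-- `Z_α(μ) = ((b₊;q)_∞/(μ^{-1}b₊;q)_∞) k^{α₂} b₋^{α₁}` for `α = (α₁,α₂)`. -/
def Zop (q mu : ℝ) (α : ℕ × ℕ) : Module.End ℝ Fock :=
  Ratio q 1 mu⁻¹ * (Kop q) ^ α.2 * (Bm q) ^ α.1

/-!
The prefactor of `Z_α` and `Z_0(λ)⁻¹` are power series in `b₊`, and `b₊` acts on coefficient
sequences as multiplication by `X`; so `Z_0(λ)⁻¹ Z_0(λ) = 1` is an identity of formal power series.
The series `F = (ηX;q)_∞/(ζX;q)_∞` satisfies `(1 - ζX) F(X) = (1 - ηX) F(qX)`, hence the product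
of `F` with its `η ↔ ζ` swap is invariant under `X ↦ qX`, so constant, equal to `1`. After this
cancellation, moving `b₋^{β₁}` past `k^{γ₂}` with `b₋ k = q k b₋` produces the factor `q^{β₁γ₂}`.
-/

open PowerSeries

def mulEnd (f : PowerSeries ℝ) : Module.End ℝ Fock where
  toFun v i := coeff i (f * mk v)
  map_add' v w := by
    funext i
    rw [show mk (v + w) = mk v + mk w by ext; simp]
    simp [mul_add]
  map_smul' c v := by
    funext i
    rw [show mk (c • v) = c • mk v by ext; simp]
    simp

def ratioSeries (q η ζ : ℝ) : PowerSeries ℝ := mk (ratioCoeff q η ζ)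

theorem mulEnd_mul (f g : PowerSeries ℝ) : mulEnd (f * g) = mulEnd f * mulEnd g := by
  ext v i
  show coeff i (f * g * mk v) = coeff i (f * mk fun j => coeff j (g * mk v))
  rw [mul_assoc]
  congr 3
  ext; simp

theorem mulEnd_one : mulEnd 1 = 1 := by
  ext v i
  simp [mulEnd]

theorem Ratio_eq_mulEnd (q η ζ : ℝ) : Ratio q η ζ = mulEnd (ratioSeries q η ζ) := by
  ext v i
  simp [Ratio, mulEnd, ratioSeries, coeff_mul, Finset.Nat.sum_antidiagonal_eq_sum_range_succ_mk]

theorem ratioCoeff_succ {q : ℝ} (hq : ∀ n : ℕ, q ^ (n + 1) ≠ 1) (η ζ : ℝ) (n : ℕ) :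
    (1 - q ^ (n + 1)) * ratioCoeff q η ζ (n + 1) = (ζ - η * q ^ n) * ratioCoeff q η ζ n := by
  have hqP : qP q q n ≠ 0 := Finset.prod_ne_zero_iff.2 fun j _ => by
    rw [← pow_succ']; exact sub_ne_zero.2 (hq j).symm
  have hn : 1 - q ^ (n + 1) ≠ 0 := sub_ne_zero.2 (hq n).symm
  simp only [ratioCoeff, qP, Finset.prod_range_succ, ← pow_succ'] at hqP ⊢
  field_simp

theorem one_sub_C_mul_X_mul_ratioSeries {q : ℝ} (hq : ∀ n : ℕ, q ^ (n + 1) ≠ 1) (η ζ : ℝ) :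
    (1 - C ζ * X) * ratioSeries q η ζ =
      (1 - C η * X) * rescale q (ratioSeries q η ζ) := by
  ext (_ | n)
  · simp [ratioSeries, rescale_mk]
  · simp only [ratioSeries, sub_mul, one_mul, mul_assoc, map_sub, coeff_C_mul, coeff_succ_X_mul,
      coeff_rescale, coeff_mk]
    linear_combination ratioCoeff_succ hq η ζ n

theorem eq_C_of_rescale_eq {q : ℝ} (hq : ∀ n : ℕ, q ^ (n + 1) ≠ 1) {f : PowerSeries ℝ}
    (hf : rescale q f = f) : f = C (constantCoeff f) := by
  ext (_ | n)
  · simp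
  · have h := congrArg (coeff (n + 1)) hf
    rw [coeff_rescale] at h
    have : (q ^ (n + 1) - 1) * coeff (n + 1) f = 0 := by linear_combination h
    simpa [coeff_C, sub_ne_zero.2 (hq n)] using this

theorem ratioSeries_mul_ratioSeries_swap {q : ℝ} (hq : ∀ n : ℕ, q ^ (n + 1) ≠ 1) (η ζ : ℝ) :
    ratioSeries q η ζ * ratioSeries q ζ η = 1 := by
  set A := ratioSeries q η ζ
  set B := ratioSeries q ζ η
  have hne : (1 - C ζ * X) * (1 - C η * X) ≠ (0 : PowerSeries ℝ) := by
    intro h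
    simpa using congrArg constantCoeff h
  have hAB : rescale q (A * B) = A * B := by
    refine (mul_left_cancel₀ hne ?_).symm
    calc (1 - C ζ * X) * (1 - C η * X) * (A * B)
        = ((1 - C ζ * X) * A) * ((1 - C η * X) * B) := by ring
      _ = ((1 - C η * X) * rescale q A) * ((1 - C ζ * X) * rescale q B) := by
        rw [one_sub_C_mul_X_mul_ratioSeries hq, one_sub_C_mul_X_mul_ratioSeries hq]
      _ = (1 - C ζ * X) * (1 - C η * X) * rescale q (A * B) := by
        rw [map_mul]; ring
  rw [eq_C_of_rescale_eq hq hAB]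
  simp [A, B, ratioSeries, ratioCoeff, qP]

theorem Ratio_mul_Ratio {q : ℝ} (hq : ∀ n : ℕ, q ^ (n + 1) ≠ 1) (η ζ : ℝ) :
    Ratio q η ζ * Ratio q ζ η = 1 := by
  rw [Ratio_eq_mulEnd, Ratio_eq_mulEnd, ← mulEnd_mul, ratioSeries_mul_ratioSeries_swap hq,
    mulEnd_one]

theorem pow_mul_pow_of_mul_eq_smul {R A : Type*} [CommSemiring R] [Semiring A] [Algebra R A]
    {q : R} {b k : A} (h : b * k = q • (k * b)) (m n : ℕ) :
    b ^ m * k ^ n = q ^ (m * n) • (k ^ n * b ^ m) := by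
  have hk : ∀ m : ℕ, b ^ m * k = q ^ m • (k * b ^ m) := by
    intro m
    induction m with
    | zero => simp
    | succ m ih =>
      rw [pow_succ, mul_assoc, h, mul_smul_comm, ← mul_assoc, ih, smul_mul_assoc, smul_smul,
        mul_assoc, ← pow_succ, ← pow_succ']
  induction n with
  | zero => simp
  | succ n ih =>
    rw [pow_succ, ← mul_assoc, ih, smul_mul_assoc, mul_assoc, hk, mul_smul_comm, smul_smul,
      ← mul_assoc, ← pow_succ, ← pow_add, Nat.mul_succ]

theorem Bm_mul_Kop (q : ℝ) : Bm q * Kop q = q • (Kop q * Bm q) := by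
  ext v i
  show (1 - q ^ (i + 1)) * (q ^ (i + 1) * v (i + 1)) =
    q * (q ^ i * ((1 - q ^ (i + 1)) * v (i + 1)))
  ring

theorem auxiliary_condition_general (q lam mu : ℝ) (hq0 : 0 < q) (hq1 : q < 1)
    (β γ : ℕ × ℕ) :
    Zop q mu β * Ratio q lam⁻¹ 1 * Zop q lam γ
      = (q ^ (β.1 * γ.2)) • Zop q mu (β + γ) := by
  have hq : ∀ n : ℕ, q ^ (n + 1) ≠ 1 := fun n => (pow_lt_one₀ hq0.le hq1 n.succ_ne_zero).ne
  have hcancel := Ratio_mul_Ratio hq lam⁻¹ 1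
  have hswap := pow_mul_pow_of_mul_eq_smul (Bm_mul_Kop q) β.1 γ.2
  simp only [Zop, Prod.fst_add, Prod.snd_add, pow_add, mul_assoc] at hcancel hswap ⊢
  rw [← mul_assoc (Ratio q lam⁻¹ 1), hcancel, one_mul, ← mul_assoc (Bm q ^ β.1), hswap]
  simp only [smul_mul_assoc, mul_smul_comm, mul_assoc]

/-- The auxiliary condition:
`Z_β(μ) Z_0(λ)^{-1} Z_γ(λ) = q^{φ(β,γ)} Z_{β+γ}(μ)` with `φ(β,γ) = β₁γ₂`,
where `Z_0(λ)^{-1} = (λ^{-1}b₊;q)_∞/(b₊;q)_∞`. -/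
theorem auxiliary_condition (q lam mu : ℝ) (hq0 : 0 < q) (hq1 : q < 1)
    (hlam : lam ≠ 0) (hmu : mu ≠ 0) (β γ : ℕ × ℕ) :
    Zop q mu β * Ratio q lam⁻¹ 1 * Zop q lam γ
      = (q ^ (β.1 * γ.2)) • Zop q mu (β + γ) :=
  auxiliary_condition_general q lam mu hq0 hq1 β γ
end
end
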